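/- The number of nodes n of a skew binomial tree of rank r satisfies 2^r ≤ n ≤ 2^{r+1} − 1. -/
import Mathlib


/-- Rose trees (unlabeled). -/
inductive BTree where
  | node : List BTree → BTree

mutual
  /-- Number of nodes of a tree. -/
  def BTree.size : BTree → ℕ
    | .node ts => 1 + BTree.sizeList ts
  /-- Total number of nodes of a list of trees. -/
  def BTree.sizeList : List BTree → ℕ
    | [] => 0
    | t :: ts => t.size + BTree.sizeList ts
end

/-- The children of the root of a tree. -/
def BTree.children : BTree → List BTree
  | .node ts => ts

/-- `IsSkew t r`: `t` is a skew binomial tree of rank `r`. -/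
inductive IsSkew : BTree → ℕ → Prop where
  | leaf : IsSkew (.node []) 0
  | simpleLink {l : List BTree} {t : BTree} {r : ℕ} :
      IsSkew (.node l) r → IsSkew t r → IsSkew (.node (t :: l)) (r + 1)
  | typeA {t1 t2 : BTree} {r : ℕ} :
      IsSkew t1 r → IsSkew t2 r → IsSkew (.node [t1, t2]) (r + 1)
  | typeB {t0 t : BTree} {l : List BTree} {r : ℕ} :
      IsSkew t0 0 → IsSkew t r → IsSkew (.node l) r → IsSkew (.node (t0 :: t :: l)) (r + 1)

/-- The number of nodes `n` of a skew binomial tree of rank `r` satisfies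
`2^r ≤ n ≤ 2^(r+1) - 1`. -/
theorem stmt6 (t : BTree) (r : ℕ) (h : IsSkew t r) :
    2 ^ r ≤ t.size ∧ t.size ≤ 2 ^ (r + 1) - 1 := by
  induction h with
  | leaf => simp [BTree.size, BTree.sizeList]
  | simpleLink h1 h2 ih1 ih2 =>
    rename_i l' t' r'
    have hp : (1:ℕ) ≤ 2 ^ r' := Nat.one_le_two_pow
    simp only [BTree.size, BTree.sizeList, pow_succ] at *
    omega
  | typeA h1 h2 ih1 ih2 =>
    rename_i t1' t2' r'
    have hp : (1:ℕ) ≤ 2 ^ r' := Nat.one_le_two_pow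
    simp only [BTree.size, BTree.sizeList, pow_succ] at *
    omega
  | typeB h0 h1 h2 ih0 ih1 ih2 =>
    rename_i t0' t' l' r'
    have hp : (1:ℕ) ≤ 2 ^ r' := Nat.one_le_two_pow
    simp only [BTree.size, BTree.sizeList, pow_succ] at *
    omega
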